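/- Let L ≥ 1, N a positive even integer, Δx = L/N ≤ 1, let ĥ : 𝒦 → ℝ, let V : 𝒳 → ℝ be a lattice function with discrete Fourier transform V̂, and define the matrix Ĥ on ℓ²(𝒦) by Ĥ_{kl} = ĥ_k δ_{kl} + (1/L) V̂_{k−l}. Assume λ ∈ ℂ is such that Ĝ = (λ − Ĥ)⁻¹ exists with matrix 2-norm ‖Ĝ‖. Then, denoting by (1 + ĥ) the diagonal matrix with entries 1 + ĥ_k, one has ‖ Ĝ (1 + ĥ) ‖ ≤ 1 + ‖Ĝ‖ ( |1 + λ| + √(2π) ‖V‖_{L^∞(𝒳)} ), where ‖·‖ is the operator norm on ℓ²(𝒦). -/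

import Mathlib

open scoped BigOperators Real
open MeasureTheory

noncomputable section

/-- The periodic distance `min_{k ∈ ℤ} |x - L k|`. -/
def dtilde (L x : ℝ) : ℝ := sInf {r : ℝ | ∃ k : ℤ, r = |x - L * k|}

/-- The mollified periodic distance `d_L(x, 0)`. -/
def dmol (L x : ℝ) : ℝ :=
  Real.sqrt (L ^ 2 / 4 + 1) -
    Real.sqrt ((Real.sqrt (L ^ 2 / 4 + 1) - Real.sqrt (dtilde L x ^ 2 + 1)) ^ 2 + 1)

/-- The mollified periodic distance `d_L(x, y)`. -/
def dL (L x y : ℝ) : ℝ := dmol L (x - y)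

/-- The grid point `x_i = i Δx`, with `Δx = L / N`. -/
def gridX (L : ℝ) (N : ℕ) (i : ZMod N) : ℝ := (ZMod.val i : ℝ) * (L / N)

/-- Forward difference operator on periodic lattice functions. -/
def Dplus {N : ℕ} (dx : ℝ) (f : ZMod N → ℂ) : ZMod N → ℂ :=
  fun i => (f (i + 1) - f i) / (dx : ℂ)

/-- Backward difference operator on periodic lattice functions. -/
def Dminus {N : ℕ} (dx : ℝ) (f : ZMod N → ℂ) : ZMod N → ℂ :=
  fun i => (f i - f (i - 1)) / (dx : ℂ)

/-- Second order finite difference Laplacian `Δ = 𝒟⁺𝒟⁻`. -/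
def discLap {N : ℕ} (dx : ℝ) (f : ZMod N → ℂ) : ZMod N → ℂ :=
  Dplus dx (Dminus dx f)

/-- Weighted `ℓ²` norm `(w Σ |f i|²)^{1/2}`; with `w = Δx` this is `‖·‖_{L²(𝒳)}`,
with `w = Δk` this is `‖·‖_{L²(𝒦)}`. -/
def wnorm {N : ℕ} [NeZero N] (w : ℝ) (f : ZMod N → ℂ) : ℝ :=
  Real.sqrt (w * ∑ i : ZMod N, ‖f i‖ ^ 2)

/-- The Fourier grid point `k = n Δk` with `n ∈ (-N/2, N/2]` corresponding to `j ∈ ZMod N`. -/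
def kval (L : ℝ) (N : ℕ) (j : ZMod N) : ℝ :=
  ((if (ZMod.val j : ℤ) ≤ (N : ℤ) / 2 then (ZMod.val j : ℤ) else (ZMod.val j : ℤ) - (N : ℤ)) : ℝ) *
    (2 * Real.pi / L)

/-- Discrete Fourier transform `f̂_k = Δx Σ_x e^{-i k x} f(x)`. -/
def dft (L : ℝ) {N : ℕ} [NeZero N] (f : ZMod N → ℂ) (j : ZMod N) : ℂ :=
  ((L / N : ℝ) : ℂ) *
    ∑ i : ZMod N, Complex.exp (-Complex.I * (kval L N j : ℂ) * ((gridX L N i : ℝ) : ℂ)) * f i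

/-- Inverse discrete Fourier transform `f(x) = (1/L) Σ_k e^{i k x} f̂_k`. -/
def idft (L : ℝ) {N : ℕ} [NeZero N] (fh : ZMod N → ℂ) (i : ZMod N) : ℂ :=
  ((1 / L : ℝ) : ℂ) *
    ∑ j : ZMod N, Complex.exp (Complex.I * (kval L N j : ℂ) * ((gridX L N i : ℝ) : ℂ)) * fh j

/-- Periodic difference operator on the Fourier grid, `(𝒟 f̂)_k = (f̂_k - f̂_{k-Δk})/Δk`. -/
def Dk {N : ℕ} (dk : ℝ) (fh : ZMod N → ℂ) : ZMod N → ℂ :=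
  fun j => (fh j - fh (j - 1)) / (dk : ℂ)

/-- Real-valued version of the periodic difference operator on the Fourier grid. -/
def DkR {N : ℕ} (dk : ℝ) (fh : ZMod N → ℝ) : ZMod N → ℝ :=
  fun j => (fh j - fh (j - 1)) / dk

/-- The distance `d(x,0)`: equal to `x` on `[0, L/2)` and `L - x` on `[L/2, L)`. -/
def dfun (L x : ℝ) : ℝ := if x < L / 2 then x else L - x

/-- The mollified symbol `ĥ_k = θ̂(k)(k² - k_c²) + k_c²` on the Fourier grid, `k_c = π N / L`. -/
def hsym (L : ℝ) (N : ℕ) (θ : ℝ → ℝ) (j : ZMod N) : ℝ :=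
  θ (kval L N j) * ((kval L N j) ^ 2 - (Real.pi * N / L) ^ 2) + (Real.pi * N / L) ^ 2

/-- The Fourier space Hamiltonian matrix `Ĥ_{kl} = ĥ_k δ_{kl} + (1/L) V̂_{k-l}`. -/
def Hmat (L : ℝ) {N : ℕ} [NeZero N] (hh : ZMod N → ℝ) (V : ZMod N → ℝ) :
    Matrix (ZMod N) (ZMod N) ℂ :=
  Matrix.of fun k l =>
    (if k = l then (hh k : ℂ) else 0) + ((1 / L : ℝ) : ℂ) * dft L (fun i => (V i : ℂ)) (k - l)

end

/-! Split `Ĥ = ĥ + K`, where `K_{kl} = V̂_{k-l} / L` is a circulant matrix. The resolvent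
identity gives `Ĝ (1 + ĥ) = (1 + λ) Ĝ - 1 - Ĝ K`. By the convolution theorem `K` is conjugate,
through the discrete Fourier transform, to multiplication by `V` on the lattice, so Parseval's
identity gives `‖K‖ ≤ ‖V‖_∞ ≤ √(2π) ‖V‖_∞`. -/

open ZMod AddChar Finset Matrix

namespace ZMod

variable {N : ℕ} [NeZero N]

theorem sum_stdAddChar_mul_conj (i j : ZMod N) :
    ∑ k, stdAddChar (-(i * k)) * (starRingEnd ℂ) (stdAddChar (-(j * k))) =
      if i = j then (N : ℂ) else 0 := by
  have h := sum_mulShift (j - i) (isPrimitive_stdAddChar N)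
  simp only [ZMod.card, sub_eq_zero, eq_comm (a := j), Nat.cast_ite, Nat.cast_zero] at h
  rw [← h]
  refine sum_congr rfl fun k _ => ?_
  rw [← map_neg_eq_conj, ← map_add_eq_mul]
  ring_nf

theorem sum_norm_sq_dft (Φ : ZMod N → ℂ) :
    ∑ k, ‖𝓕 Φ k‖ ^ 2 = N * ∑ j, ‖Φ j‖ ^ 2 := by
  have key : ∑ k, 𝓕 Φ k * (starRingEnd ℂ) (𝓕 Φ k) =
      N * ∑ j, Φ j * (starRingEnd ℂ) (Φ j) := by
    calc ∑ k, 𝓕 Φ k * (starRingEnd ℂ) (𝓕 Φ k)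
        = ∑ i, ∑ j, (∑ k, stdAddChar (-(i * k)) * (starRingEnd ℂ) (stdAddChar (-(j * k)))) *
            (Φ i * (starRingEnd ℂ) (Φ j)) := by
          simp only [dft_apply, smul_eq_mul, map_sum, map_mul, sum_mul, mul_sum]
          rw [sum_comm_cycle]
          refine sum_congr rfl fun i _ => ?_
          rw [sum_comm]
          exact sum_congr rfl fun j _ => sum_congr rfl fun k _ => by ring
      _ = N * ∑ j, Φ j * (starRingEnd ℂ) (Φ j) := by
          simp [sum_stdAddChar_mul_conj, mul_sum]
  simp only [Complex.mul_conj, Complex.normSq_eq_norm_sq] at key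
  exact_mod_cast key

theorem sum_norm_sq_invDFT (Ψ : ZMod N → ℂ) :
    ∑ k, ‖𝓕⁻ Ψ k‖ ^ 2 = (N : ℝ)⁻¹ * ∑ j, ‖Ψ j‖ ^ 2 := by
  have hN : (N : ℝ) ≠ 0 := Nat.cast_ne_zero.2 (NeZero.ne N)
  rw [eq_inv_mul_iff_mul_eq₀ hN, ← sum_norm_sq_dft, LinearEquiv.apply_symm_apply]

theorem circulant_dft_mulVec (g v : ZMod N → ℂ) :
    circulant ((N : ℂ)⁻¹ • 𝓕 g) *ᵥ v = 𝓕 (g * 𝓕⁻ v) := by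
  ext k
  simp only [mulVec, dotProduct, circulant_apply, Pi.smul_apply, dft_apply,
    invDFT_apply, Pi.mul_apply, smul_eq_mul, mul_sum, sum_mul]
  rw [sum_comm]
  refine sum_congr rfl fun l _ => sum_congr rfl fun i _ => ?_
  rw [show -(l * (k - i)) = -(l * k) + i * l by ring, map_add_eq_mul]
  ring

theorem sum_norm_sq_circulant_dft_mulVec_le {g : ZMod N → ℂ} {C : ℝ} (hg : ∀ i, ‖g i‖ ≤ C)
    (v : ZMod N → ℂ) :
    ∑ k, ‖(circulant ((N : ℂ)⁻¹ • 𝓕 g) *ᵥ v) k‖ ^ 2 ≤ C ^ 2 * ∑ k, ‖v k‖ ^ 2 := by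
  have hN : (N : ℝ) ≠ 0 := Nat.cast_ne_zero.2 (NeZero.ne N)
  calc ∑ k, ‖(circulant ((N : ℂ)⁻¹ • 𝓕 g) *ᵥ v) k‖ ^ 2
      = N * ∑ i, ‖g i‖ ^ 2 * ‖𝓕⁻ v i‖ ^ 2 := by
        simp only [circulant_dft_mulVec, sum_norm_sq_dft, Pi.mul_apply, norm_mul, mul_pow]
    _ ≤ N * ∑ i, C ^ 2 * ‖𝓕⁻ v i‖ ^ 2 := by
        gcongr with i
        exact hg i
    _ = C ^ 2 * ∑ k, ‖v k‖ ^ 2 := by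
        rw [← mul_sum, sum_norm_sq_invDFT]
        field_simp

end ZMod

theorem mul_one_add_eq_of_mul_sub_eq_one {A : Type*} [Ring A] [Algebra ℂ A] {G D K : A} {lam : ℂ}
    (h : G * (lam • 1 - (D + K)) = 1) : G * (1 + D) = (1 + lam) • G - 1 - G * K := by
  have hD : 1 + D = (1 + lam) • (1 : A) - (lam • 1 - (D + K)) - K := by
    rw [add_smul, one_smul]
    abel
  rw [hD, mul_sub, mul_sub, h, mul_smul_comm, mul_one]

section lattice

variable {L : ℝ} {N : ℕ} [NeZero N]

theorem exists_intCast_eq_kval (j : ZMod N) :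
    ∃ n : ℤ, (n : ZMod N) = j ∧ kval L N j = n * (2 * Real.pi / L) :=
  ⟨if (ZMod.val j : ℤ) ≤ (N : ℤ) / 2 then ZMod.val j else ZMod.val j - N,
    by split_ifs <;> simp, by rw [kval]; push_cast; rfl⟩

theorem exp_kval_mul_gridX (hL : L ≠ 0) (j i : ZMod N) :
    Complex.exp (-Complex.I * (kval L N j : ℂ) * ((gridX L N i : ℝ) : ℂ)) =
      stdAddChar (-(i * j)) := by
  obtain ⟨n, hn, hk⟩ := exists_intCast_eq_kval (L := L) j
  have hcast : ((-((ZMod.val i : ℤ) * n) : ℤ) : ZMod N) = -(i * j) := by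
    push_cast
    rw [hn, ZMod.natCast_zmod_val]
  have hN : (N : ℂ) ≠ 0 := Nat.cast_ne_zero.2 (NeZero.ne N)
  have hLc : (L : ℂ) ≠ 0 := Complex.ofReal_ne_zero.2 hL
  rw [← hcast, stdAddChar_coe, hk, gridX]
  congr 1
  push_cast
  field_simp

theorem dft_eq_smul_dft (hL : L ≠ 0) (f : ZMod N → ℂ) :
    _root_.dft L f = ((L / N : ℝ) : ℂ) • 𝓕 f := by
  ext j
  simp only [_root_.dft, exp_kval_mul_gridX hL, Pi.smul_apply, dft_apply, smul_eq_mul]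

theorem Hmat_eq_diagonal_add_circulant (hL : L ≠ 0) (hh V : ZMod N → ℝ) :
    Hmat L hh V = diagonal (fun k => (hh k : ℂ)) +
      circulant ((N : ℂ)⁻¹ • 𝓕 fun i => (V i : ℂ)) := by
  have hLc : (L : ℂ) ≠ 0 := Complex.ofReal_ne_zero.2 hL
  ext k l
  simp only [Hmat, dft_eq_smul_dft hL, of_apply, Matrix.add_apply, diagonal_apply, circulant_apply,
    Pi.smul_apply, smul_eq_mul]
  push_cast
  field_simp

theorem mul_diagonal_one_add_mulVec_eq (hL : L ≠ 0) {hh V : ZMod N → ℝ} {lam : ℂ}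
    {G : Matrix (ZMod N) (ZMod N) ℂ} (hG : G * (lam • 1 - Hmat L hh V) = 1) (v : ZMod N → ℂ) :
    (G * diagonal fun k => 1 + (hh k : ℂ)) *ᵥ v =
      (1 + lam) • (G *ᵥ v) - v - G *ᵥ (circulant ((N : ℂ)⁻¹ • 𝓕 fun i => (V i : ℂ)) *ᵥ v) := by
  rw [Hmat_eq_diagonal_add_circulant hL] at hG
  have hD : (diagonal fun k => 1 + (hh k : ℂ)) = 1 + diagonal fun k => (hh k : ℂ) := by
    rw [← diagonal_one, diagonal_add]
  rw [hD, mul_one_add_eq_of_mul_sub_eq_one hG, sub_mulVec, sub_mulVec, smul_mulVec, one_mulVec,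
    mulVec_mulVec]

end lattice

section wnorm

variable {N : ℕ} [NeZero N] {w : ℝ}

theorem wnorm_eq_sqrt_mul_norm (hw : 0 ≤ w) (f : ZMod N → ℂ) :
    wnorm w f = √w * ‖WithLp.toLp 2 f‖ := by
  rw [wnorm, EuclideanSpace.norm_eq, ← Real.sqrt_mul hw]

theorem wnorm_nonneg (f : ZMod N → ℂ) : 0 ≤ wnorm w f := Real.sqrt_nonneg _

theorem wnorm_smul (hw : 0 ≤ w) (c : ℂ) (f : ZMod N → ℂ) :
    wnorm w (c • f) = ‖c‖ * wnorm w f := by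
  rw [wnorm_eq_sqrt_mul_norm hw, wnorm_eq_sqrt_mul_norm hw, WithLp.toLp_smul, norm_smul]
  ring

theorem wnorm_sub_le (hw : 0 ≤ w) (f g : ZMod N → ℂ) :
    wnorm w (f - g) ≤ wnorm w f + wnorm w g := by
  simp only [wnorm_eq_sqrt_mul_norm hw, WithLp.toLp_sub, ← mul_add]
  exact mul_le_mul_of_nonneg_left (norm_sub_le _ _) (Real.sqrt_nonneg w)

theorem wnorm_le_mul_of_sum_le (hw : 0 ≤ w) {f g : ZMod N → ℂ} {C : ℝ} (hC : 0 ≤ C)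
    (h : ∑ i, ‖f i‖ ^ 2 ≤ C ^ 2 * ∑ i, ‖g i‖ ^ 2) : wnorm w f ≤ C * wnorm w g := by
  rw [wnorm, wnorm, ← Real.sqrt_sq hC, ← Real.sqrt_mul (sq_nonneg C)]
  refine Real.sqrt_le_sqrt ?_
  nlinarith

theorem nonneg_of_forall_wnorm_mulVec_le (hw : 0 < w) {A : Matrix (ZMod N) (ZMod N) ℂ} {M : ℝ}
    (h : ∀ v, wnorm w (A *ᵥ v) ≤ M * wnorm w v) : 0 ≤ M := by
  have hpos : 0 < wnorm w (fun _ : ZMod N => (1 : ℂ)) := by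
    rw [wnorm]
    simp only [norm_one, one_pow, sum_const, card_univ, ZMod.card, nsmul_eq_mul, mul_one]
    exact Real.sqrt_pos.2 (mul_pos hw (Nat.cast_pos.2 (NeZero.pos N)))
  exact (mul_nonneg_iff_of_pos_right hpos).1 ((wnorm_nonneg _).trans (h _))

theorem wnorm_circulant_dft_mulVec_le (hw : 0 ≤ w) (V : ZMod N → ℝ) (v : ZMod N → ℂ) :
    wnorm w (circulant ((N : ℂ)⁻¹ • 𝓕 fun i => (V i : ℂ)) *ᵥ v) ≤
      (⨆ i, |V i|) * wnorm w v := by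
  have hV (i : ZMod N) : ‖(V i : ℂ)‖ ≤ ⨆ i, |V i| := by
    rw [Complex.norm_real, Real.norm_eq_abs]
    exact le_ciSup (f := fun i => |V i|) (Set.finite_range _).bddAbove i
  exact wnorm_le_mul_of_sum_le hw ((norm_nonneg _).trans (hV 0))
    (sum_norm_sq_circulant_dft_mulVec_le hV v)

end wnorm

theorem stmt_17_general (L : ℝ) (N : ℕ) [NeZero N] (hL : 1 ≤ L)
    (hh : ZMod N → ℝ) (V : ZMod N → ℝ) (lam : ℂ) (M : ℝ)
    (Gh : Matrix (ZMod N) (ZMod N) ℂ)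
    (hG1 : Gh * (lam • (1 : Matrix (ZMod N) (ZMod N) ℂ) - Hmat L hh V) = 1)
    (hM : ∀ v : ZMod N → ℂ,
      wnorm (2 * Real.pi / L) (Gh.mulVec v) ≤ M * wnorm (2 * Real.pi / L) v) :
    ∀ v : ZMod N → ℂ,
      wnorm (2 * Real.pi / L)
          ((Gh * Matrix.diagonal fun k => 1 + ((hh k : ℝ) : ℂ)).mulVec v) ≤
        (1 + M * (‖1 + lam‖ + Real.sqrt (2 * Real.pi) * (⨆ i : ZMod N, |V i|))) *
          wnorm (2 * Real.pi / L) v := by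
  intro v
  set w := 2 * Real.pi / L
  set sV := ⨆ i : ZMod N, |V i|
  set K := circulant ((N : ℂ)⁻¹ • 𝓕 fun i => (V i : ℂ))
  have hL0 : L ≠ 0 := by positivity
  have hw : 0 < w := by positivity
  have hsV : 0 ≤ sV :=
    (abs_nonneg (V 0)).trans (le_ciSup (f := fun i => |V i|) (Set.finite_range _).bddAbove 0)
  have hM0 : 0 ≤ M := nonneg_of_forall_wnorm_mulVec_le hw hM
  have hv : 0 ≤ wnorm w v := wnorm_nonneg v
  have h2pi : 1 ≤ √(2 * Real.pi) := Real.one_le_sqrt.2 (by linarith [Real.pi_gt_three])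
  calc wnorm w ((Gh * diagonal fun k => 1 + (hh k : ℂ)) *ᵥ v)
      ≤ ‖1 + lam‖ * wnorm w (Gh *ᵥ v) + wnorm w v + wnorm w (Gh *ᵥ (K *ᵥ v)) := by
        rw [mul_diagonal_one_add_mulVec_eq hL0 hG1, ← wnorm_smul hw.le]
        exact (wnorm_sub_le hw.le _ _).trans (add_le_add_left (wnorm_sub_le hw.le _ _) _)
    _ ≤ ‖1 + lam‖ * (M * wnorm w v) + wnorm w v + M * (sV * wnorm w v) := by
        gcongr
        exacts [hM v, (hM _).trans (mul_le_mul_of_nonneg_left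
          (wnorm_circulant_dft_mulVec_le hw.le V v) hM0)]
    _ ≤ (1 + M * (‖1 + lam‖ + √(2 * Real.pi) * sV)) * wnorm w v := by
        nlinarith [mul_nonneg (mul_nonneg hM0 hsV) (mul_nonneg (sub_nonneg.2 h2pi) hv)]

/-- `‖Ĝ (1 + ĥ)‖ ≤ 1 + ‖Ĝ‖ (|1 + λ| + √(2π) ‖V‖_∞)` for the resolvent
`Ĝ = (λ - Ĥ)⁻¹` of `Ĥ_{kl} = ĥ_k δ_{kl} + (1/L) V̂_{k-l}`, as operators on `ℓ²(𝒦)`. -/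
theorem stmt_17 (L : ℝ) (N : ℕ) [NeZero N] (hL : 1 ≤ L) (hN : Even N) (hdx : L / N ≤ 1)
    (hh : ZMod N → ℝ) (V : ZMod N → ℝ) (lam : ℂ) (M : ℝ)
    (Gh : Matrix (ZMod N) (ZMod N) ℂ)
    (hG1 : Gh * (lam • (1 : Matrix (ZMod N) (ZMod N) ℂ) - Hmat L hh V) = 1)
    (hG2 : (lam • (1 : Matrix (ZMod N) (ZMod N) ℂ) - Hmat L hh V) * Gh = 1)
    (hM : ∀ v : ZMod N → ℂ,
      wnorm (2 * Real.pi / L) (Gh.mulVec v) ≤ M * wnorm (2 * Real.pi / L) v) :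
    ∀ v : ZMod N → ℂ,
      wnorm (2 * Real.pi / L)
          ((Gh * Matrix.diagonal fun k => 1 + ((hh k : ℝ) : ℂ)).mulVec v) ≤
        (1 + M * (‖1 + lam‖ + Real.sqrt (2 * Real.pi) * (⨆ i : ZMod N, |V i|))) *
          wnorm (2 * Real.pi / L) v :=
  stmt_17_general L N hL hh V lam M Gh hG1 hM
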